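/- Let L : [0, δ] → ℝ be a nonnegative C² function with L(0) = 0 satisfying the differential inequality L''(r) ≥ L'(r)²/L(r) − Cλ wherever L(r) > 0, and suppose ∫₀^δ L(r) dr ≤ 1. Then there exists λ₀ and a constant C' depending only on C and δ such that for λ ≥ λ₀, L(r) ≤ C' λ r² for all r ∈ [0, δ/3]. -/

import Mathlib

open Real MeasureTheory intervalIntegral

/-!
With `c = Cλ`, the energy `B = L'²/L² - 2c/L` has derivative `(2L'/L²)(L'' - L'²/L + c)`, so the
differential inequality makes `B` nondecreasing where `L' ≥ 0` and nonincreasing where `L' ≤ 0`.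
Hence if `L'(s)² > 2cL(s)`, i.e. `B(s) > 0`, at some `s ≤ δ/3`, then `L'` keeps its sign while
moving away from `s`. If `L'(s) < 0`, this gives `L(0) > L(s) > 0`, which is absurd. If `L'(s) > 0`,
then `(√L)' ≥ √(c/2)` forces `L(t) ≥ c(t - s)²/2` on `[s, s + δ/2]`, so `∫ L ≥ cδ³/48 > 1` once
`λ` is large.
Therefore `L'² ≤ 2cL` on `(0, δ/3]`, that is `(√L)' ≤ √(c/2)` where `L > 0`, and integrating from
the last zero of `L` before `r` gives `L(r) ≤ cr²/2`.
-/

open Set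

section Zeros

variable {g : ℝ → ℝ} {a b : ℝ}

lemma exists_first_zero (hg : ContinuousOn g (Icc a b)) (ha : 0 < g a)
    (hb : ∃ t ∈ Icc a b, g t ≤ 0) :
    ∃ t ∈ Ioc a b, g t = 0 ∧ ∀ u ∈ Ico a t, 0 < g u := by
  have exists_zero_le : ∀ t ∈ Icc a b, g t ≤ 0 → ∃ z ∈ Icc a t, g z = 0 := fun t ht hgt =>
    intermediate_value_Icc' ht.1 (hg.mono (Icc_subset_Icc_right ht.2)) ⟨hgt, ha.le⟩
  set Z := Icc a b ∩ g ⁻¹' {0}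
  have hZ : IsClosed Z := hg.preimage_isClosed_of_isClosed isClosed_Icc isClosed_singleton
  have hZbdd : BddBelow Z := ⟨a, fun x hx => hx.1.1⟩
  obtain ⟨t, ht, hgt⟩ := hb
  obtain ⟨z, hz, hgz⟩ := exists_zero_le t ht hgt
  obtain ⟨⟨hat₁, ht₁b⟩, hgt₁⟩ := hZ.csInf_mem ⟨z, ⟨hz.1, hz.2.trans ht.2⟩, hgz⟩ hZbdd
  refine ⟨sInf Z, ⟨hat₁.lt_of_ne ?_, ht₁b⟩, hgt₁, fun u hu => ?_⟩
  · intro h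
    rw [← h] at hgt₁
    exact ha.ne' hgt₁
  · by_contra! hgu
    obtain ⟨w, hw, hgw⟩ := exists_zero_le u ⟨hu.1, hu.2.le.trans ht₁b⟩ hgu
    have := csInf_le hZbdd ⟨⟨hw.1, hw.2.trans (hu.2.le.trans ht₁b)⟩, hgw⟩
    linarith [hw.2, hu.2]

lemma exists_last_zero (hg : ContinuousOn g (Icc a b)) (hab : a ≤ b) (ha : g a = 0) :
    ∃ t ∈ Icc a b, g t = 0 ∧ ∀ u ∈ Ioc t b, g u ≠ 0 := by
  set Z := Icc a b ∩ g ⁻¹' {0}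
  have hZ : IsClosed Z := hg.preimage_isClosed_of_isClosed isClosed_Icc isClosed_singleton
  have hZbdd : BddAbove Z := ⟨b, fun x hx => hx.1.2⟩
  obtain ⟨ht, hgt⟩ := hZ.csSup_mem ⟨a, left_mem_Icc.2 hab, ha⟩ hZbdd
  refine ⟨sSup Z, ht, hgt, fun u hu hgu => ?_⟩
  have := le_csSup hZbdd ⟨⟨ht.1.trans hu.1.le, hu.2⟩, hgu⟩
  linarith [hu.1]

end Zeros

lemma monotoneOn_Icc_of_hasDerivAt_nonneg {φ φ' : ℝ → ℝ} {a b : ℝ}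
    (hcont : ContinuousOn φ (Icc a b)) (hφ : ∀ x ∈ Ioo a b, HasDerivAt φ (φ' x) x)
    (hφ' : ∀ x ∈ Ioo a b, 0 ≤ φ' x) : MonotoneOn φ (Icc a b) := by
  refine monotoneOn_of_hasDerivWithinAt_nonneg (f' := φ') (convex_Icc a b) hcont ?_ ?_ <;>
    rw [interior_Icc]
  · exact fun x hx => (hφ x hx).hasDerivWithinAt
  · exact hφ'

lemma hasDerivAt_deriv_of_contDiffOn {L : ℝ → ℝ} {s : Set ℝ} {x : ℝ} (hL : ContDiffOn ℝ 2 L s)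
    (hs : IsOpen s) (hx : x ∈ s) :
    HasDerivAt L (deriv L x) x ∧ HasDerivAt (deriv L) (deriv (deriv L) x) x :=
  ⟨((hL.differentiableOn (by norm_num)).differentiableAt (hs.mem_nhds hx)).hasDerivAt,
    (((hL.deriv_of_isOpen hs (m := 1) (by norm_num)).differentiableOn one_ne_zero).differentiableAt
      (hs.mem_nhds hx)).hasDerivAt⟩

section SqrtSlope

variable {c x y : ℝ}

lemma sq_div_two_sqrt (hy : 0 ≤ y) : (x / (2 * √y)) ^ 2 = x ^ 2 / (4 * y) := by
  rw [div_pow, mul_pow, sq_sqrt hy]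
  norm_num

lemma sqrt_half_le_div_two_sqrt (hy : 0 < y) (hx : 0 ≤ x) (h : 2 * c * y ≤ x ^ 2) :
    √(c / 2) ≤ x / (2 * √y) := by
  refine Real.sqrt_le_iff.2 ⟨div_nonneg hx (by positivity), ?_⟩
  rw [sq_div_two_sqrt hy.le, le_div_iff₀ (by positivity)]
  linarith

lemma div_two_sqrt_le_sqrt_half (hy : 0 < y) (h : x ^ 2 ≤ 2 * c * y) :
    x / (2 * √y) ≤ √(c / 2) := by
  refine (le_abs_self _).trans (Real.abs_le_sqrt ?_)
  rw [sq_div_two_sqrt hy.le, div_le_iff₀ (by positivity)]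
  linarith

end SqrtSlope

/-- In terms of `v = log f` this is `v'² - 2c e⁻ᵛ`, and the differential inequality
`f'' ≥ f'²/f - c` reads `v'' ≥ -c e⁻ᵛ`. -/
noncomputable def energy (c : ℝ) (f f' : ℝ → ℝ) (t : ℝ) : ℝ := f' t ^ 2 / f t ^ 2 - 2 * c / f t

section Energy

variable {f f' f'' : ℝ → ℝ} {c a b : ℝ}

lemma energy_pos_iff {t : ℝ} (ht : 0 < f t) :
    0 < energy c f f' t ↔ 2 * c * f t < f' t ^ 2 := by
  have : energy c f f' t = (f' t ^ 2 - 2 * c * f t) / f t ^ 2 := by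
    unfold energy
    field_simp
  rw [this, div_pos_iff_of_pos_right (by positivity), sub_pos]

lemma hasDerivAt_energy {x : ℝ} (hf : HasDerivAt f (f' x) x) (hf' : HasDerivAt f' (f'' x) x)
    (hx : f x ≠ 0) :
    HasDerivAt (energy c f f') (2 * f' x / f x ^ 2 * (f'' x - f' x ^ 2 / f x + c)) x := by
  refine (((hf'.fun_pow 2).div (hf.fun_pow 2) (pow_ne_zero 2 hx)).sub
    ((hasDerivAt_const x (2 * c)).div hf hx)).congr_deriv ?_
  field_simp
  ring

variable (hf : ∀ x ∈ Icc a b, HasDerivAt f (f' x) x) (hf' : ∀ x ∈ Icc a b, HasDerivAt f' (f'' x) x)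
include hf hf'

lemma energy_monotoneOn (hpos : ∀ x ∈ Icc a b, 0 < f x)
    (hineq : ∀ x ∈ Icc a b, f' x ^ 2 / f x - c ≤ f'' x) (hmono : ∀ x ∈ Icc a b, 0 ≤ f' x) :
    MonotoneOn (energy c f f') (Icc a b) := by
  have hE : ∀ x ∈ Icc a b, HasDerivAt (energy c f f')
      (2 * f' x / f x ^ 2 * (f'' x - f' x ^ 2 / f x + c)) x := fun x hx =>
    hasDerivAt_energy (hf x hx) (hf' x hx) (hpos x hx).ne'
  refine monotoneOn_Icc_of_hasDerivAt_nonneg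
    (fun x hx => (hE x hx).continuousAt.continuousWithinAt)
    (fun x hx => hE x (Ioo_subset_Icc_self hx)) fun x hx => ?_
  have hx := Ioo_subset_Icc_self hx
  exact mul_nonneg (div_nonneg (by linarith [hmono x hx]) (sq_nonneg _))
    (by linarith [hineq x hx])

lemma pos_and_energy_pos_of_deriv_nonneg
    (hineq : ∀ x ∈ Icc a b, 0 < f x → f' x ^ 2 / f x - c ≤ f'' x)
    (hmono : ∀ x ∈ Icc a b, 0 ≤ f' x) (hfa : 0 < f a) (hEa : 2 * c * f a < f' a ^ 2) :
    ∀ t ∈ Icc a b, 0 < f t ∧ 2 * c * f t < f' t ^ 2 := by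
  intro t ht
  have ha : a ∈ Icc a b := left_mem_Icc.2 (ht.1.trans ht.2)
  have hf_mono : MonotoneOn f (Icc a b) := monotoneOn_Icc_of_hasDerivAt_nonneg
    (fun x hx => (hf x hx).continuousAt.continuousWithinAt)
    (fun x hx => hf x (Ioo_subset_Icc_self hx)) fun x hx => hmono x (Ioo_subset_Icc_self hx)
  have hpos : ∀ x ∈ Icc a b, 0 < f x := fun x hx => hfa.trans_le (hf_mono ha hx hx.1)
  have hE := energy_monotoneOn hf hf' hpos (fun x hx => hineq x hx (hpos x hx)) hmono
  refine ⟨hpos t ht, (energy_pos_iff (hpos t ht)).1 ?_⟩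
  exact ((energy_pos_iff hfa).2 hEa).trans_le (hE ha ht ht.1)

lemma deriv_pos_of_energy_pos (hc : 0 ≤ c)
    (hineq : ∀ x ∈ Icc a b, 0 < f x → f' x ^ 2 / f x - c ≤ f'' x)
    (hfa : 0 < f a) (hf'a : 0 < f' a) (hEa : 2 * c * f a < f' a ^ 2) :
    ∀ t ∈ Icc a b, 0 < f' t := by
  by_contra! h
  obtain ⟨t₁, ht₁, hzero, hpos⟩ := exists_first_zero
    (fun x hx => (hf' x hx).continuousAt.continuousWithinAt) hf'a h
  have hsub : Icc a t₁ ⊆ Icc a b := Icc_subset_Icc_right ht₁.2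
  have hnonneg : ∀ x ∈ Icc a t₁, 0 ≤ f' x := by
    intro x hx
    rcases hx.2.eq_or_lt with rfl | hlt
    · exact hzero.ge
    · exact (hpos x ⟨hx.1, hlt⟩).le
  obtain ⟨hft₁, hEt₁⟩ := pos_and_energy_pos_of_deriv_nonneg (fun x hx => hf x (hsub hx))
    (fun x hx => hf' x (hsub hx)) (fun x hx => hineq x (hsub hx)) hnonneg hfa hEa t₁
    (right_mem_Icc.2 ht₁.1.le)
  rw [hzero] at hEt₁
  nlinarith

lemma deriv_neg_of_energy_pos (hc : 0 ≤ c)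
    (hineq : ∀ x ∈ Icc a b, 0 < f x → f' x ^ 2 / f x - c ≤ f'' x)
    (hfb : 0 < f b) (hf'b : f' b < 0) (hEb : 2 * c * f b < f' b ^ 2) :
    ∀ t ∈ Icc a b, f' t < 0 := by
  -- `t ↦ -t` preserves the differential inequality and flips the sign of `f'`.
  have hrefl : ∀ x ∈ Icc (-b) (-a), -x ∈ Icc a b := fun x hx =>
    neg_mem_Icc_iff.2 (by simpa using hx)
  have key := deriv_pos_of_energy_pos (f := fun x => f (-x)) (f' := fun x => -f' (-x))
    (f'' := fun x => f'' (-x)) (a := -b) (b := -a)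
    (fun x hx => by
      simpa [Function.comp_def] using (hf (-x) (hrefl x hx)).comp x (hasDerivAt_neg' x))
    (fun x hx => by
      simpa [Function.comp_def] using ((hf' (-x) (hrefl x hx)).comp x (hasDerivAt_neg' x)).fun_neg)
    hc (fun x hx => by simpa using hineq (-x) (hrefl x hx))
    (by simpa using hfb) (by simpa using hf'b) (by simpa using hEb)
  intro t ht
  simpa using key (-t) (neg_mem_Icc_iff.2 (by simpa using ht))

end Energy

section Growth

variable {f f' : ℝ → ℝ} {c a b : ℝ}

lemma half_mul_sq_le_of_two_mul_le_sq_deriv (hc : 0 ≤ c) (hf : ∀ x ∈ Icc a b, HasDerivAt f (f' x) x)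
    (hpos : ∀ x ∈ Icc a b, 0 < f x) (hf' : ∀ x ∈ Icc a b, 0 ≤ f' x)
    (hE : ∀ x ∈ Icc a b, 2 * c * f x ≤ f' x ^ 2) :
    ∀ t ∈ Icc a b, c / 2 * (t - a) ^ 2 ≤ f t := by
  intro t ht
  have hφ : ∀ x ∈ Icc a b, HasDerivAt (fun y => √(f y) - √(c / 2) * y)
      (f' x / (2 * √(f x)) - √(c / 2)) x := fun x hx =>
    (((hf x hx).sqrt (hpos x hx).ne').sub ((hasDerivAt_id' x).const_mul (√(c / 2)))).congr_deriv
      (by rw [mul_one])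
  have hmono := monotoneOn_Icc_of_hasDerivAt_nonneg
    (fun x hx => (hφ x hx).continuousAt.continuousWithinAt)
    (fun x hx => hφ x (Ioo_subset_Icc_self hx)) fun x hx => by
      have hx := Ioo_subset_Icc_self hx
      exact sub_nonneg.2 (sqrt_half_le_div_two_sqrt (hpos x hx) (hf' x hx) (hE x hx))
  have hat := hmono (left_mem_Icc.2 (ht.1.trans ht.2)) ht ht.1
  have hlin : √(c / 2) * (t - a) ≤ √(f t) := by
    simp only at hat
    linarith [sqrt_nonneg (f a)]
  calc c / 2 * (t - a) ^ 2 = (√(c / 2) * (t - a)) ^ 2 := by rw [mul_pow, sq_sqrt (by positivity)]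
    _ ≤ √(f t) ^ 2 := pow_le_pow_left₀ (mul_nonneg (sqrt_nonneg _) (sub_nonneg.2 ht.1)) hlin 2
    _ = f t := sq_sqrt (hpos t ht).le

lemma le_half_mul_sq_of_sq_deriv_le (hc : 0 ≤ c) (hab : a ≤ b) (hcont : ContinuousOn f (Icc a b))
    (hf : ∀ x ∈ Ioo a b, HasDerivAt f (f' x) x) (hnn : ∀ x ∈ Icc a b, 0 ≤ f x) (ha : f a = 0)
    (hE : ∀ x ∈ Ioo a b, f' x ^ 2 ≤ 2 * c * f x) :
    f b ≤ c / 2 * (b - a) ^ 2 := by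
  obtain ⟨t₀, ht₀, hft₀, hne⟩ := exists_last_zero hcont hab ha
  have hsub : Icc t₀ b ⊆ Icc a b := Icc_subset_Icc_left ht₀.1
  have hIoo : ∀ x ∈ Ioo t₀ b, x ∈ Ioo a b := fun x hx => ⟨ht₀.1.trans_lt hx.1, hx.2⟩
  have hpos : ∀ x ∈ Ioo t₀ b, 0 < f x := fun x hx =>
    (hnn x (hsub (Ioo_subset_Icc_self hx))).lt_of_ne (hne x (Ioo_subset_Ioc_self hx)).symm
  have hφ : ∀ x ∈ Ioo t₀ b, HasDerivAt (fun y => √(c / 2) * y - √(f y))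
      (√(c / 2) - f' x / (2 * √(f x))) x := fun x hx =>
    (((hasDerivAt_id' x).const_mul (√(c / 2))).sub
      ((hf x (hIoo x hx)).sqrt (hpos x hx).ne')).congr_deriv (by rw [mul_one])
  have hmono := monotoneOn_Icc_of_hasDerivAt_nonneg (φ := fun y => √(c / 2) * y - √(f y))
    ((continuousOn_const.mul continuousOn_id).sub (hcont.mono hsub).sqrt) hφ fun x hx =>
      sub_nonneg.2 (div_two_sqrt_le_sqrt_half (hpos x hx) (hE x (hIoo x hx)))
  have hbt := hmono (left_mem_Icc.2 ht₀.2) (right_mem_Icc.2 ht₀.2) ht₀.2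
  simp only [hft₀, sqrt_zero, sub_zero] at hbt
  have hlin : √(f b) ≤ √(c / 2) * (b - a) := by
    nlinarith [mul_nonneg (sqrt_nonneg (c / 2)) (sub_nonneg.2 ht₀.1)]
  calc f b = √(f b) ^ 2 := (sq_sqrt (hnn b (right_mem_Icc.2 hab))).symm
    _ ≤ (√(c / 2) * (b - a)) ^ 2 := pow_le_pow_left₀ (sqrt_nonneg _) hlin 2
    _ = c / 2 * (b - a) ^ 2 := by rw [mul_pow, sq_sqrt (by positivity)]

end Growth

lemma mul_cube_le_integral_of_energy_pos {f f' f'' : ℝ → ℝ} {c s h : ℝ} (hc : 0 ≤ c) (hh : 0 ≤ h)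
    (hf : ∀ x ∈ Icc s (s + h), HasDerivAt f (f' x) x)
    (hf' : ∀ x ∈ Icc s (s + h), HasDerivAt f' (f'' x) x)
    (hineq : ∀ x ∈ Icc s (s + h), 0 < f x → f' x ^ 2 / f x - c ≤ f'' x)
    (hfs : 0 < f s) (hf's : 0 < f' s) (hEs : 2 * c * f s < f' s ^ 2) :
    c * h ^ 3 / 6 ≤ ∫ x in s..s + h, f x := by
  have hderiv := deriv_pos_of_energy_pos hf hf' hc hineq hfs hf's hEs
  have henergy := pos_and_energy_pos_of_deriv_nonneg hf hf' hineq (fun x hx => (hderiv x hx).le)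
    hfs hEs
  have hgrowth := half_mul_sq_le_of_two_mul_le_sq_deriv hc hf (fun x hx => (henergy x hx).1)
    (fun x hx => (hderiv x hx).le) fun x hx => (henergy x hx).2.le
  calc c * h ^ 3 / 6 = ∫ x in s..s + h, c / 2 * (x - s) ^ 2 := by
        rw [intervalIntegral.integral_const_mul, integral_comp_sub_right (· ^ 2), sub_self,
          add_sub_cancel_left, integral_pow]
        ring
    _ ≤ ∫ x in s..s + h, f x :=
      integral_mono_on (by linarith) ((by fun_prop : Continuous _).intervalIntegrable _ _)
        (ContinuousOn.intervalIntegrable_of_Icc (by linarith)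
          fun x hx => (hf x hx).continuousAt.continuousWithinAt) hgrowth

theorem sq_deriv_le_of_integral_le {f f' f'' : ℝ → ℝ} {c δ : ℝ} (hc : 0 ≤ c) (hcδ : 48 < c * δ ^ 3)
    (hcont : ContinuousOn f (Icc 0 δ)) (hf : ∀ x ∈ Ioo 0 δ, HasDerivAt f (f' x) x)
    (hf' : ∀ x ∈ Ioo 0 δ, HasDerivAt f' (f'' x) x) (hnn : ∀ x ∈ Icc 0 δ, 0 ≤ f x) (h0 : f 0 = 0)
    (hineq : ∀ x ∈ Ioo 0 δ, 0 < f x → f' x ^ 2 / f x - c ≤ f'' x)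
    (hint : ∫ x in 0..δ, f x ≤ 1) :
    ∀ s ∈ Ioc 0 (δ / 3), f' s ^ 2 ≤ 2 * c * f s := by
  intro s hs
  by_contra! hEs
  have hδ : 0 < δ := by linarith [hs.1, hs.2]
  have hsδ : s ∈ Ioo 0 δ := ⟨hs.1, by linarith [hs.2]⟩
  have hfs : 0 < f s := by
    refine (hnn s (Ioo_subset_Icc_self hsδ)).lt_of_ne fun hzero => ?_
    have hmin : IsLocalMin f s := Filter.mem_of_superset (Icc_mem_nhds hsδ.1 hsδ.2)
      fun x hx => hzero ▸ hnn x hx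
    rw [hmin.hasDerivAt_eq_zero (hf s hsδ), ← hzero] at hEs
    simp at hEs
  rcases lt_trichotomy (f' s) 0 with hneg | hzero | hpos
  · obtain ⟨ξ, hξ, hslope⟩ := exists_hasDerivAt_eq_slope f f' hs.1
      (hcont.mono (Icc_subset_Icc_right hsδ.2.le)) fun x hx => hf x ⟨hx.1, hx.2.trans hsδ.2⟩
    have hsub : Icc ξ s ⊆ Ioo 0 δ := fun x hx => ⟨hξ.1.trans_le hx.1, hx.2.trans_lt hsδ.2⟩
    have hf'ξ := deriv_neg_of_energy_pos (fun x hx => hf x (hsub hx)) (fun x hx => hf' x (hsub hx))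
      hc (fun x hx => hineq x (hsub hx)) hfs hneg hEs ξ (left_mem_Icc.2 hξ.2.le)
    rw [hslope, h0, sub_zero, sub_zero] at hf'ξ
    linarith [div_pos hfs hs.1]
  · rw [hzero] at hEs
    nlinarith
  · have hsub : Icc s (s + δ / 2) ⊆ Ioo 0 δ := fun x hx =>
      ⟨hs.1.trans_le hx.1, by linarith [hx.2, hs.2]⟩
    have hlower := mul_cube_le_integral_of_energy_pos hc (by positivity)
      (fun x hx => hf x (hsub hx)) (fun x hx => hf' x (hsub hx))
      (fun x hx => hineq x (hsub hx)) hfs hpos hEs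
    have hmono : ∫ x in s..s + δ / 2, f x ≤ ∫ x in 0..δ, f x :=
      integral_mono_interval hs.1.le (by linarith) (by linarith [hs.2])
        ((ae_restrict_mem measurableSet_Ioc).mono fun x hx => hnn x (Ioc_subset_Icc_self hx))
        (hcont.intervalIntegrable_of_Icc hδ.le)
    nlinarith

theorem boundary_L2_quadratic_bound (δ C : ℝ) (hδ : 0 < δ) (hC : 0 < C) :
    ∃ lam₀ C' : ℝ, 0 < C' ∧
      ∀ lam : ℝ, lam₀ ≤ lam →
        ∀ L : ℝ → ℝ,
          ContDiffOn ℝ 2 L (Set.Icc 0 δ) →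
          (∀ r ∈ Set.Icc (0:ℝ) δ, 0 ≤ L r) →
          L 0 = 0 →
          (∀ r ∈ Set.Icc (0:ℝ) δ, 0 < L r →
              deriv (deriv L) r ≥ (deriv L r) ^ 2 / L r - C * lam) →
          (∫ r in (0:ℝ)..δ, L r) ≤ 1 →
          ∀ r ∈ Set.Icc (0:ℝ) (δ / 3), L r ≤ C' * lam * r ^ 2 := by
  refine ⟨49 / (C * δ ^ 3), C / 2, by positivity, fun lam hlam L hL hnn hL0 hineq hint r hr => ?_⟩
  have hCδ : 0 < C * δ ^ 3 := by positivity
  have hlam_pos : 0 < lam := (by positivity : 0 < 49 / (C * δ ^ 3)).trans_le hlam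
  have hbig : 48 < C * lam * δ ^ 3 := by
    have := (div_le_iff₀ hCδ).1 hlam
    linarith
  have hderivs := fun x (hx : x ∈ Ioo 0 δ) =>
    hasDerivAt_deriv_of_contDiffOn (hL.mono Ioo_subset_Icc_self) isOpen_Ioo hx
  have key := sq_deriv_le_of_integral_le (by positivity) hbig hL.continuousOn
    (fun x hx => (hderivs x hx).1) (fun x hx => (hderivs x hx).2) hnn hL0
    (fun x hx => hineq x (Ioo_subset_Icc_self hx)) hint
  have hrδ : r ≤ δ := by linarith [hr.2]
  calc L r ≤ C * lam / 2 * (r - 0) ^ 2 :=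
        le_half_mul_sq_of_sq_deriv_le (by positivity) hr.1
          (hL.continuousOn.mono (Icc_subset_Icc_right hrδ))
          (fun x hx => (hderivs x ⟨hx.1, hx.2.trans_le hrδ⟩).1)
          (fun x hx => hnn x ⟨hx.1, hx.2.trans hrδ⟩) hL0
          fun x hx => key x ⟨hx.1, hx.2.le.trans hr.2⟩
    _ = C / 2 * lam * r ^ 2 := by ring
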